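/- arXiv:2207.04525 — 6 statements merged into one kernel-verified Lean document; each statement's English description precedes it below -/
import Mathlib

section
/- For all real constants a, b, c > 0 and every symmetric traceless real 3×3 matrix Q, the bulk potential satisfies f_b(Q) ≥ 0, and f_b(Q) = 0 if and only if Q = s₊(n⊗n − (1/3)Id) for some unit vector n ∈ S², i.e. if and only if Q belongs to 𝒩. -/
open MeasureTheory Matrix Metric Filter
open scoped RealInnerProductSpace

noncomputable section

attribute [local instance] Matrix.frobeniusNormedAddCommGroup Matrix.frobeniusNormedSpace

/-- The space of real 3×3 matrices. -/
abbrev Mat3 := Matrix (Fin 3) (Fin 3) ℝ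

/-- Euclidean 3-space. -/
abbrev E3 := EuclideanSpace ℝ (Fin 3)

/-- The constant `s₊ = (b² + √(b⁴ + 24a²c²))/(4c²)`. -/
def sPlus (a b c : ℝ) : ℝ := (b ^ 2 + Real.sqrt (b ^ 4 + 24 * a ^ 2 * c ^ 2)) / (4 * c ^ 2)

/-- The matrix `n ⊗ n`, with entries `nᵢnⱼ`. -/
def outer (n : Fin 3 → ℝ) : Mat3 := fun i j => n i * n j

/-- The vacuum manifold `𝒩 = { s₊(n⊗n − (1/3)Id) : n ∈ S² }`. -/
def Nset (a b c : ℝ) : Set Mat3 :=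
  {Q | ∃ n : Fin 3 → ℝ, (∑ i, n i ^ 2) = 1 ∧
    Q = sPlus a b c • (outer n - (1 / 3 : ℝ) • (1 : Mat3))}

/-- Squared Frobenius norm `tr(AAᵀ) = ∑ᵢⱼ Aᵢⱼ²`. -/
def frobSq (A : Mat3) : ℝ := ∑ i, ∑ j, (A i j) ^ 2

/-- Frobenius norm. -/
def frob (A : Mat3) : ℝ := Real.sqrt (frobSq A)

/-- The additive normalization constant `C₀ = a²s₊²/3 + 2b²s₊³/27 − c²s₊⁴/9`. -/
def C0 (a b c : ℝ) : ℝ :=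
  a ^ 2 * (sPlus a b c) ^ 2 / 3 + 2 * b ^ 2 * (sPlus a b c) ^ 3 / 27
    - c ^ 2 * (sPlus a b c) ^ 4 / 9

/-- The bulk potential `f_b(Q)`. -/
def fb (a b c : ℝ) (Q : Mat3) : ℝ :=
  -(a ^ 2 / 2) * (Q * Q).trace - (b ^ 2 / 3) * (Q * Q * Q).trace
    + (c ^ 2 / 4) * ((Q * Q).trace) ^ 2 + C0 a b c

/-- Frobenius distance from `Q` to the manifold `𝒩`. -/
def distN (a b c : ℝ) (Q : Mat3) : ℝ := sInf {d : ℝ | ∃ N ∈ Nset a b c, d = frob (Q - N)}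

/-- Partial derivative `∂_α Q(x)` of a matrix-valued map. -/
def pd (Q : E3 → Mat3) (α : Fin 3) (x : E3) : Mat3 :=
  fderiv ℝ Q x (EuclideanSpace.single α 1)

/-- `|∇Q(x)|² = ∑_α |∂_αQ(x)|²` (Frobenius norms). -/
def gradSq (Q : E3 → Mat3) (x : E3) : ℝ := ∑ α, frobSq (pd Q α x)

/-- Radial derivative `(∂Q/∂r)(x) = ∑_α (x_α/|x|) ∂_αQ(x)`. -/
def radD (Q : E3 → Mat3) (x : E3) : Mat3 := ‖x‖⁻¹ • ∑ α, (x α) • pd Q α x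

/-- Componentwise Laplacian `ΔQ(x)`. -/
def lap (Q : E3 → Mat3) (x : E3) : Mat3 :=
  ∑ α, fderiv ℝ (fun y => pd Q α y) x (EuclideanSpace.single α 1)

/-- The Landau–de Gennes energy density `e_ε(Q) = ½|∇Q|² + ε⁻²f_b(Q)`. -/
def eDen (a b c ε : ℝ) (Q : E3 → Mat3) (x : E3) : ℝ :=
  gradSq Q x / 2 + (ε ^ 2)⁻¹ * fb a b c (Q x)

/-- `Q` is a local minimizer of `I_ε(·, U)`: its energy density is locally integrable on `U`
and it minimizes the energy on every bounded open `D` with closure in `U` among competitors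
with locally integrable energy density agreeing with `Q` outside a compact subset of `D`. -/
def IsLocalMinimizer (a b c ε : ℝ) (U : Set E3) (Q : E3 → Mat3) : Prop :=
  LocallyIntegrableOn (eDen a b c ε Q) U volume ∧
  ∀ D : Set E3, IsOpen D → Bornology.IsBounded D → closure D ⊆ U →
    ∀ V : E3 → Mat3, LocallyIntegrableOn (eDen a b c ε V) U volume →
      (∃ K : Set E3, K ⊆ D ∧ IsCompact K ∧ ∀ x ∈ U \ K, V x = Q x) →
      ∫ x in D, eDen a b c ε Q x ≤ ∫ x in D, eDen a b c ε V x

/-!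
Diagonalize `Q`: its eigenvalues `μᵢ` sum to `0`; write `∑ μᵢ² = 2s²/3` with `s ≥ 0`. Then
`f_b(Q) = (b²/3)(2s³/9 − ∑ μᵢ³) + g(s)`, where `g(s)` is the value of `f_b` at the uniaxial state
`s(n⊗n − Id/3)`. The first term is nonnegative since
`2s³/9 − ∑ μᵢ³ = ∑ (μᵢ + s/3)²(2s/3 − μᵢ)` and each `μᵢ ≤ 2s/3`. The second is nonnegative since
`s₊` is a positive double root of the quartic `g`. Equality forces `s = s₊` and every
`μᵢ ∈ {−s₊/3, 2s₊/3}`, i.e. the spectrum `(2s₊/3, −s₊/3, −s₊/3)`, and the spectral theorem then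
gives `Q = s₊(n⊗n − Id/3)` with `n` a unit eigenvector for `2s₊/3`.
-/

namespace Matrix.IsHermitian

variable {𝕜 : Type*} [RCLike 𝕜] {n : Type*} [Fintype n] [DecidableEq n]

theorem trace_pow {A : Matrix n n 𝕜} (hA : A.IsHermitian) (k : ℕ) :
    (A ^ k).trace = ∑ i, (hA.eigenvalues i : 𝕜) ^ k := by
  conv_lhs => rw [hA.spectral_theorem]
  rw [← map_pow, Unitary.conjStarAlgAut_apply, trace_mul_cycle,
    Unitary.coe_star_mul_self, one_mul, diagonal_pow, trace_diagonal]
  rfl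

theorem eq_smul_one_add_smul_vecMulVec {A : Matrix n n ℝ} (hA : A.IsHermitian) {α β : ℝ} {k : n}
    (h : ∀ i, hA.eigenvalues i = α + if i = k then β else 0) :
    A = α • 1 + β • vecMulVec ⇑(hA.eigenvectorBasis k) ⇑(hA.eigenvectorBasis k) := by
  have hdiag : diagonal (RCLike.ofReal ∘ hA.eigenvalues) =
      α • (1 : Matrix n n ℝ) + β • vecMulVec (Pi.single k 1) (Pi.single k 1) := by
    ext i j
    by_cases hij : i = j <;> by_cases hik : i = k <;>
      simp_all [diagonal, vecMulVec_apply, Pi.single_apply]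
  conv_lhs => rw [hA.spectral_theorem, Unitary.conjStarAlgAut_apply, hdiag]
  rw [mul_add, add_mul, Matrix.mul_smul, mul_one, Matrix.smul_mul,
    Unitary.mul_star_self_of_mem hA.eigenvectorUnitary.2, Matrix.mul_smul, Matrix.smul_mul,
    mul_vecMulVec, vecMulVec_mul, star_eq_conjTranspose, conjTranspose_eq_transpose_of_trivial,
    vecMul_transpose, eigenvectorUnitary_mulVec]

theorem sum_sq_eigenvectorBasis {A : Matrix n n ℝ} (hA : A.IsHermitian) (k : n) :
    ∑ i, hA.eigenvectorBasis k i ^ 2 = 1 := by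
  rw [← EuclideanSpace.real_norm_sq_eq, hA.eigenvectorBasis.orthonormal.1 k, one_pow]

end Matrix.IsHermitian

theorem Matrix.isIdempotentElem_vecMulVec_self {n R : Type*} [Fintype n] [CommSemiring R]
    {v : n → R} (hv : v ⬝ᵥ v = 1) : IsIdempotentElem (vecMulVec v v) := by
  rw [IsIdempotentElem, vecMulVec_mul_vecMulVec, hv, one_smul]

theorem trace_powers_of_eq_smul_sub {P Q : Mat3} (hP : IsIdempotentElem P) (htr : P.trace = 1)
    {t : ℝ} (hQ : Q = t • (P - (1 / 3 : ℝ) • 1)) :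
    (Q * Q).trace = 2 * t ^ 2 / 3 ∧ (Q * Q * Q).trace = 2 * t ^ 3 / 9 := by
  have hsq : Q * Q = (t ^ 2 / 3) • P + (t ^ 2 / 9) • 1 := by
    simp only [hQ, Matrix.smul_mul, Matrix.mul_smul, sub_mul, mul_sub, hP.eq, Matrix.mul_one,
      Matrix.one_mul, smul_smul]
    module
  have hcube : Q * Q * Q = (t ^ 3 / 3) • P - (t ^ 3 / 27) • 1 := by
    rw [hsq, hQ]
    simp only [Matrix.smul_mul, Matrix.mul_smul, add_mul, mul_sub, hP.eq, Matrix.mul_one,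
      Matrix.one_mul, smul_smul]
    module
  rw [hcube, hsq]
  simp only [trace_add, trace_sub, trace_smul, htr, trace_one, Fintype.card_fin,
    smul_eq_mul]
  constructor <;> ring

namespace TracelessEigenvalues

variable {μ : Fin 3 → ℝ} {s : ℝ}

theorem sum_add_third_sq (h1 : ∑ i, μ i = 0) (h2 : ∑ i, μ i ^ 2 = 2 * s ^ 2 / 3) :
    ∑ i, (μ i + s / 3) ^ 2 = s ^ 2 := by
  simp only [Fin.sum_univ_three] at *
  linear_combination h2 + (2 * s / 3) * h1

theorem sub_sum_cube_eq (h1 : ∑ i, μ i = 0) :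
    2 * s ^ 3 / 9 - ∑ i, μ i ^ 3 = ∑ i, (μ i + s / 3) ^ 2 * (2 * s / 3 - μ i) := by
  simp only [Fin.sum_univ_three] at *
  linear_combination (-s ^ 2 / 3) * h1

theorem apply_le (h1 : ∑ i, μ i = 0) (h2 : ∑ i, μ i ^ 2 = 2 * s ^ 2 / 3) (hs : 0 ≤ s)
    (i : Fin 3) : μ i ≤ 2 * s / 3 := by
  simp only [Fin.sum_univ_three] at h1 h2
  fin_cases i <;> simp only [Fin.zero_eta, Fin.mk_one, Fin.reduceFinMk] <;>
    nlinarith [sq_nonneg (μ 0 - μ 1), sq_nonneg (μ 1 - μ 2), sq_nonneg (μ 0 - μ 2)]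

theorem sum_cube_le (h1 : ∑ i, μ i = 0) (h2 : ∑ i, μ i ^ 2 = 2 * s ^ 2 / 3) (hs : 0 ≤ s) :
    ∑ i, μ i ^ 3 ≤ 2 * s ^ 3 / 9 := by
  have := sub_sum_cube_eq (s := s) h1
  have : 0 ≤ ∑ i, (μ i + s / 3) ^ 2 * (2 * s / 3 - μ i) := Finset.sum_nonneg fun i _ =>
    mul_nonneg (sq_nonneg _) (sub_nonneg.2 (apply_le h1 h2 hs i))
  linarith

theorem exists_eq_of_sum_cube_eq (h1 : ∑ i, μ i = 0) (h2 : ∑ i, μ i ^ 2 = 2 * s ^ 2 / 3)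
    (hs : 0 < s) (h3 : ∑ i, μ i ^ 3 = 2 * s ^ 3 / 9) :
    ∃ k, ∀ i, μ i = -s / 3 + if i = k then s else 0 := by
  have hterm : ∀ i, μ i = -s / 3 ∨ μ i = 2 * s / 3 := by
    have hsum := sub_sum_cube_eq (s := s) h1
    rw [h3, sub_self, eq_comm, Finset.sum_eq_zero_iff_of_nonneg fun i _ =>
      mul_nonneg (sq_nonneg _) (sub_nonneg.2 (apply_le h1 h2 hs.le i))] at hsum
    intro i
    rcases mul_eq_zero.1 (hsum i (Finset.mem_univ i)) with h | h
    · left; linarith [pow_eq_zero_iff two_ne_zero |>.1 h]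
    · right; linarith
  obtain ⟨k, hk⟩ : ∃ k, μ k = 2 * s / 3 := by
    by_contra! hne
    have hall : ∀ i, μ i = -s / 3 := fun i => (hterm i).resolve_right (hne i)
    simp only [Fin.sum_univ_three, hall] at h1
    linarith
  refine ⟨k, fun i => ?_⟩
  by_cases hik : i = k
  · subst hik; simp only [if_true]; linarith
  · have hrest : ∑ j ∈ Finset.univ.erase k, (μ j + s / 3) ^ 2 = 0 := by
      have := sum_add_third_sq h1 h2
      rw [← Finset.add_sum_erase _ _ (Finset.mem_univ k), hk] at this
      linarith
    have := (Finset.sum_eq_zero_iff_of_nonneg fun j _ => sq_nonneg (μ j + s / 3)).1 hrest i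
      (Finset.mem_erase.2 ⟨hik, Finset.mem_univ i⟩)
    simp only [hik, if_false]
    linarith [pow_eq_zero_iff two_ne_zero |>.1 this]

end TracelessEigenvalues

/-- `f_b(s(n⊗n − Id/3))` for any unit vector `n`. -/
def fbUniaxial (a b c s : ℝ) : ℝ :=
  -(a ^ 2 / 3) * s ^ 2 - (2 * b ^ 2 / 27) * s ^ 3 + (c ^ 2 / 9) * s ^ 4 + C0 a b c

theorem fb_eq_of_trace_mul_self {a b c s : ℝ} {Q : Mat3} (hQ : (Q * Q).trace = 2 * s ^ 2 / 3) :
    fb a b c Q = b ^ 2 / 3 * (2 * s ^ 3 / 9 - (Q * Q * Q).trace) + fbUniaxial a b c s := by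
  rw [fb, fbUniaxial, hQ]
  ring

section sPlus

variable {a b c : ℝ}

theorem sPlus_pos (hb : b ≠ 0) (hc : c ≠ 0) : 0 < sPlus a b c := by
  unfold sPlus
  positivity

theorem two_mul_sq_sPlus (hc : c ≠ 0) :
    2 * c ^ 2 * sPlus a b c ^ 2 = b ^ 2 * sPlus a b c + 3 * a ^ 2 := by
  have h := Real.sq_sqrt (show 0 ≤ b ^ 4 + 24 * a ^ 2 * c ^ 2 by positivity)
  unfold sPlus
  generalize √(b ^ 4 + 24 * a ^ 2 * c ^ 2) = r at h ⊢
  field_simp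
  linear_combination 2 * h

theorem sPlus_mul_fbUniaxial (hc : c ≠ 0) (s : ℝ) :
    27 * sPlus a b c * fbUniaxial a b c s = (s - sPlus a b c) ^ 2 *
      (c ^ 2 * sPlus a b c * (3 * s ^ 2 + 2 * sPlus a b c * s + sPlus a b c ^ 2)
        + 3 * a ^ 2 * (2 * s + sPlus a b c)) := by
  unfold fbUniaxial C0
  linear_combination 2 * (s ^ 3 - sPlus a b c ^ 3) * two_mul_sq_sPlus (a := a) (b := b) hc

theorem fbUniaxial_nonneg (hb : b ≠ 0) (hc : c ≠ 0) {s : ℝ} (hs : 0 ≤ s) :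
    0 ≤ fbUniaxial a b c s := by
  have ht := sPlus_pos (a := a) hb hc
  refine (mul_nonneg_iff_of_pos_left (by positivity : (0 : ℝ) < 27 * sPlus a b c)).1 ?_
  rw [sPlus_mul_fbUniaxial hc]
  positivity

theorem fbUniaxial_eq_zero_iff (hb : b ≠ 0) (hc : c ≠ 0) {s : ℝ} (hs : 0 ≤ s) :
    fbUniaxial a b c s = 0 ↔ s = sPlus a b c := by
  have ht := sPlus_pos (a := a) hb hc
  rw [← mul_right_inj' (by positivity : 27 * sPlus a b c ≠ 0), mul_zero, sPlus_mul_fbUniaxial hc,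
    mul_eq_zero, or_iff_left (by positivity), sq_eq_zero_iff, sub_eq_zero]

end sPlus

theorem fb_eq_zero_of_mem_Nset {a b c : ℝ} (hb : b ≠ 0) (hc : c ≠ 0) {Q : Mat3}
    (hQ : Q ∈ Nset a b c) : fb a b c Q = 0 := by
  obtain ⟨n, hn, hQn⟩ := hQ
  have hnn : n ⬝ᵥ n = 1 := by simpa [dotProduct, sq] using hn
  obtain ⟨h2, h3⟩ := trace_powers_of_eq_smul_sub (isIdempotentElem_vecMulVec_self hnn)
    (by rwa [trace_vecMulVec]) hQn
  rw [fb_eq_of_trace_mul_self h2, h3, sub_self, mul_zero, zero_add,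
    fbUniaxial_eq_zero_iff hb hc (sPlus_pos hb hc).le]

theorem mem_Nset_of_eigenvalues {a b c : ℝ} {Q : Mat3} (hQ : Q.IsHermitian) {k : Fin 3}
    (hk : ∀ i, hQ.eigenvalues i = -sPlus a b c / 3 + if i = k then sPlus a b c else 0) :
    Q ∈ Nset a b c := by
  refine ⟨_, hQ.sum_sq_eigenvectorBasis k, (hQ.eq_smul_one_add_smul_vecMulVec hk).trans ?_⟩
  change _ = _ • (vecMulVec _ _ - _)
  module

theorem stmt0_general (a b c : ℝ) (hb : 0 < b) (hc : 0 < c)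
    (Q : Mat3) (hsym : Q.IsSymm) (htr : Q.trace = 0) :
    0 ≤ fb a b c Q ∧ (fb a b c Q = 0 ↔ Q ∈ Nset a b c) := by
  have hQ : Q.IsHermitian := isHermitian_iff_isSymm.2 hsym
  set μ := hQ.eigenvalues
  have h1 : ∑ i, μ i = 0 := by simpa [hQ.trace_eq_sum_eigenvalues] using htr
  have h2 : (Q * Q).trace = ∑ i, μ i ^ 2 := by rw [← sq, hQ.trace_pow]; rfl
  have h3 : (Q * Q * Q).trace = ∑ i, μ i ^ 3 := by rw [← pow_three', hQ.trace_pow]; rfl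
  obtain ⟨s, hs, hs2⟩ : ∃ s, 0 ≤ s ∧ (Q * Q).trace = 2 * s ^ 2 / 3 :=
    ⟨√(3 / 2 * (Q * Q).trace), Real.sqrt_nonneg _, by
      rw [Real.sq_sqrt (by rw [h2]; positivity)]; ring⟩
  have hbiax : 0 ≤ b ^ 2 / 3 * (2 * s ^ 3 / 9 - (Q * Q * Q).trace) :=
    mul_nonneg (by positivity)
      (sub_nonneg.2 (h3 ▸ TracelessEigenvalues.sum_cube_le h1 (h2 ▸ hs2) hs))
  have huni := fbUniaxial_nonneg (a := a) hb.ne' hc.ne' hs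
  rw [fb_eq_of_trace_mul_self hs2]
  refine ⟨add_nonneg hbiax huni, fun h0 => ?_, fun hN => ?_⟩
  · rw [add_eq_zero_iff_of_nonneg hbiax huni, fbUniaxial_eq_zero_iff hb.ne' hc.ne' hs,
      mul_eq_zero, or_iff_right (by positivity), sub_eq_zero] at h0
    obtain ⟨hcube, rfl⟩ := h0
    obtain ⟨k, hk⟩ := TracelessEigenvalues.exists_eq_of_sum_cube_eq h1 (h2 ▸ hs2)
      (sPlus_pos hb.ne' hc.ne') (h3 ▸ hcube.symm)
    exact mem_Nset_of_eigenvalues hQ hk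
  · rw [← fb_eq_of_trace_mul_self hs2]
    exact fb_eq_zero_of_mem_Nset hb.ne' hc.ne' hN

/-- for `a,b,c > 0` and every symmetric traceless `Q`, the bulk potential
satisfies `f_b(Q) ≥ 0`, with equality iff `Q ∈ 𝒩`. -/
theorem stmt0 (a b c : ℝ) (ha : 0 < a) (hb : 0 < b) (hc : 0 < c)
    (Q : Mat3) (hsym : Q.IsSymm) (htr : Q.trace = 0) :
    0 ≤ fb a b c Q ∧ (fb a b c Q = 0 ↔ Q ∈ Nset a b c) :=
  stmt0_general a b c hb hc Q hsym htr
end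
end

section
/- Let U ⊂ ℝ³ be open and let n : U → ℝ³ be differentiable with |n(x)| = 1 for all x ∈ U. Define Q(x) = s₊(n(x)⊗n(x) − (1/3)Id). Then Q is differentiable on U and at every x ∈ U one has the pointwise identity |∇Q(x)|² = 2s₊²|∇n(x)|², where |∇Q|² = Σ_{α=1}^3 |∂_αQ|² (Frobenius norms) and |∇n|² = Σ_{α=1}^3 |∂_αn|². -/
open MeasureTheory Matrix Metric Filter
open scoped RealInnerProductSpace

noncomputable section

attribute [local instance] Matrix.frobeniusNormedAddCommGroup Matrix.frobeniusNormedSpace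

/-- `|∇n(x)|²` for a vector-valued map. -/
def gradSqV (n : E3 → E3) (x : E3) : ℝ :=
  ∑ α, ‖fderiv ℝ n x (EuclideanSpace.single α 1)‖ ^ 2

/-! Differentiating `n ⊗ n` gives `∂n ⊗ n + n ⊗ ∂n`, whose squared Frobenius norm is
`2|n|²|∂n|² + 2⟨n, ∂n⟩²`. Since `|n| ≡ 1` on the open set `U`, `|n|² = 1` and differentiating
`|n|² ≡ 1` gives `⟨n, ∂n⟩ = 0`, leaving `2|∂n|²` in each direction. -/

open Topology

theorem inner_fderiv_eq_zero_of_eventually_norm_eq {E F : Type*} [NormedAddCommGroup E]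
    [NormedSpace ℝ E] [NormedAddCommGroup F] [InnerProductSpace ℝ F] {n : E → F} {x : E}
    {c : ℝ} (hn : DifferentiableAt ℝ n x) (hc : ∀ᶠ y in 𝓝 x, ‖n y‖ = c) (v : E) :
    ⟪n x, fderiv ℝ n x v⟫ = 0 := by
  have hconst : (‖n ·‖ ^ 2) =ᶠ[𝓝 x] fun _ => c ^ 2 := hc.mono fun y hy => congrArg (· ^ 2) hy
  have hzero : fderiv ℝ (‖n ·‖ ^ 2) x = 0 := by rw [hconst.fderiv_eq, fderiv_const_apply]
  simpa [hn.hasFDerivAt.norm_sq.fderiv] using congrArg (· v) hzero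

theorem sum_sum_mul_add_mul_sq {ι : Type*} [Fintype ι] (a b : ι → ℝ) :
    ∑ i, ∑ j, (a i * b j + b i * a j) ^ 2 =
      2 * (∑ i, a i ^ 2) * (∑ i, b i ^ 2) + 2 * (∑ i, a i * b i) ^ 2 := by
  calc ∑ i, ∑ j, (a i * b j + b i * a j) ^ 2
      = ∑ i, ∑ j, (a i ^ 2 * b j ^ 2 + b i ^ 2 * a j ^ 2 + 2 * (a i * b i) * (a j * b j)) := by
        congr! 2 with i - j -; ring
    _ = _ := by
        simp only [Finset.sum_add_distrib, ← Finset.mul_sum, ← Finset.sum_mul]; ring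

/-- `outer` as a continuous bilinear map: `outer u = outerBilin u u` holds by `rfl`. -/
def outerBilin : E3 →L[ℝ] E3 →L[ℝ] Mat3 :=
  ((vecMulVecBilin ℝ ℝ).compl₁₂ (WithLp.linearEquiv 2 ℝ (Fin 3 → ℝ)).toLinearMap
    (WithLp.linearEquiv 2 ℝ (Fin 3 → ℝ)).toLinearMap).toContinuousBilinearMap

theorem hasFDerivAt_outer {E : Type*} [NormedAddCommGroup E] [NormedSpace ℝ E] {n : E → E3}
    {n' : E →L[ℝ] E3} {x : E} (hn : HasFDerivAt n n' x) :
    HasFDerivAt (fun y => outer (n y))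
      (outerBilin.precompR E (n x) n' + outerBilin.precompL E n' (n x)) x :=
  outerBilin.hasFDerivAt_of_bilinear hn hn

theorem frobSq_smul_outerBilin_add (s : ℝ) (u v : E3) :
    frobSq (s • (outerBilin u v + outerBilin v u)) =
      2 * s ^ 2 * (‖u‖ ^ 2 * ‖v‖ ^ 2 + ⟪u, v⟫ ^ 2) := by
  have hentry (i j : Fin 3) :
      (s • (outerBilin u v + outerBilin v u)) i j = s * (u i * v j + v i * u j) := rfl
  simp only [frobSq, hentry, mul_pow, ← Finset.mul_sum, sum_sum_mul_add_mul_sq,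
    EuclideanSpace.real_norm_sq_eq, PiLp.inner_apply, RCLike.inner_apply', conj_trivial]
  ring

theorem stmt6_general (s : ℝ) (U : Set E3) (hU : IsOpen U)
    (n : E3 → E3) (hdiff : ∀ x ∈ U, DifferentiableAt ℝ n x)
    (hunit : ∀ x ∈ U, ‖n x‖ = 1)
    (Q : E3 → Mat3) (hQ : ∀ x, Q x = s • (outer (n x) - (1 / 3 : ℝ) • (1 : Mat3))) :
    ∀ x ∈ U, DifferentiableAt ℝ Q x ∧ gradSq Q x = 2 * s ^ 2 * gradSqV n x := by
  intro x hx
  have horth (v : E3) : ⟪n x, fderiv ℝ n x v⟫ = 0 :=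
    inner_fderiv_eq_zero_of_eventually_norm_eq (hdiff x hx)
      (eventually_of_mem (hU.mem_nhds hx) hunit) v
  have hQ' : HasFDerivAt Q (s • (outerBilin.precompR E3 (n x) (fderiv ℝ n x) +
      outerBilin.precompL E3 (fderiv ℝ n x) (n x))) x := by
    rw [funext hQ]
    exact ((hasFDerivAt_outer (hdiff x hx).hasFDerivAt).sub_const _).const_smul s
  -- the `show` restates `fderiv ℝ Q x` with the instance path used in `pd`, which `rw` needs
  have hpd (v : E3) : fderiv ℝ Q x v =
      s • (outerBilin (n x) (fderiv ℝ n x v) + outerBilin (fderiv ℝ n x v) (n x)) := by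
    rw [show fderiv ℝ Q x = _ from hQ'.fderiv]
    rfl
  refine ⟨hQ'.differentiableAt, ?_⟩
  simp only [gradSq, gradSqV, pd, hpd, frobSq_smul_outerBilin_add, hunit x hx, horth,
    Finset.mul_sum]
  norm_num

/-- if `n : U → S²` is differentiable and `Q = s₊(n⊗n − (1/3)Id)`, then `Q` is
differentiable on `U` and `|∇Q|² = 2s₊²|∇n|²` pointwise on `U`. -/
theorem stmt6 (s : ℝ) (hs : 0 < s) (U : Set E3) (hU : IsOpen U)
    (n : E3 → E3) (hdiff : ∀ x ∈ U, DifferentiableAt ℝ n x)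
    (hunit : ∀ x ∈ U, ‖n x‖ = 1)
    (Q : E3 → Mat3) (hQ : ∀ x, Q x = s • (outer (n x) - (1 / 3 : ℝ) • (1 : Mat3))) :
    ∀ x ∈ U, DifferentiableAt ℝ Q x ∧ gradSq Q x = 2 * s ^ 2 * gradSqV n x :=
  stmt6_general s U hU n hdiff hunit Q hQ
end
end

section
/- Let Φ : ℝ³∖{0} → 𝒬₀ be the hedgehog map Φ(x) = s₊((x/|x|)⊗(x/|x|) − (1/3)Id). Then Φ is differentiable on ℝ³∖{0} with |∇Φ(x)|² = 4s₊²/|x|² for every x ≠ 0, and for every r > 0 one has ∫_{B_r} ½|∇Φ(x)|² dx = 8π s₊² r, where B_r is the open ball of radius r centered at the origin and the integral is with respect to Lebesgue measure; equivalently (1/r)∫_{B_r} ½|∇Φ|² dx = 8π s₊² for every r > 0. -/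
open MeasureTheory Matrix Metric Filter
open scoped RealInnerProductSpace

noncomputable section

attribute [local instance] Matrix.frobeniusNormedAddCommGroup Matrix.frobeniusNormedSpace

/-! Away from the origin `Φ(x) = s(|x|⁻² x⊗x − Id/3)`, a smooth expression whose partial
derivatives are `∂_αΦ = s(|x|⁻²(x⊗e_α + e_α⊗x) − 2x_α|x|⁻⁴ x⊗x)`; summing the squares of their
entries gives `|∇Φ|² = 4s²/|x|²`. The energy on `B_r` is then a radial integral: in polar
coordinates `∫_{B_r} |x|⁻² dx = 3|B_1| ∫₀^r t² t⁻² dt = 4πr`. -/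

open scoped Topology

section RadialIntegral

variable {E : Type*} [NormedAddCommGroup E] [NormedSpace ℝ E] [Nontrivial E]
  [FiniteDimensional ℝ E] [MeasurableSpace E] [BorelSpace E]
  (μ : Measure E) [μ.IsAddHaarMeasure]

theorem setIntegral_ball_fun_norm_addHaar (f : ℝ → ℝ) (r : ℝ) :
    ∫ x in ball (0 : E) r, f ‖x‖ ∂μ =
      Module.finrank ℝ E * μ.real (ball 0 1) *
        ∫ t in Set.Ioo 0 r, t ^ (Module.finrank ℝ E - 1) * f t := by
  have hball : (ball (0 : E) r).indicator (fun x => f ‖x‖) =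
      fun x => (Set.Iio r).indicator f ‖x‖ := by
    ext x; by_cases h : ‖x‖ < r <;> simp [Set.indicator, h]
  rw [← integral_indicator measurableSet_ball, hball, integral_fun_norm_addHaar μ,
    ← Set.Ioi_inter_Iio, ← setIntegral_indicator measurableSet_Iio]
  simp only [nsmul_eq_mul, smul_eq_mul, mul_assoc]
  congr 3
  ext t; by_cases h : t < r <;> simp [Set.indicator, h]

theorem setIntegral_ball_inv_norm_sq_of_finrank_eq_three (hE : Module.finrank ℝ E = 3)
    {r : ℝ} (hr : 0 ≤ r) :
    ∫ x in ball (0 : E) r, (‖x‖ ^ 2)⁻¹ ∂μ = 3 * μ.real (ball 0 1) * r := by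
  rw [setIntegral_ball_fun_norm_addHaar μ (fun t => (t ^ 2)⁻¹), hE]
  have hone : ∫ t in Set.Ioo 0 r, t ^ (3 - 1) * (t ^ 2)⁻¹ = ∫ t in Set.Ioo 0 r, (1 : ℝ) :=
    setIntegral_congr_fun measurableSet_Ioo fun t ht => by
      have : t ≠ 0 := ht.1.ne'
      field_simp
  rw [hone, setIntegral_const, Real.volume_real_Ioo_of_le hr]
  simp

end RadialIntegral

theorem EuclideanSpace.setIntegral_ball_inv_norm_sq_fin_three {r : ℝ} (hr : 0 ≤ r) :
    ∫ x in ball (0 : E3) r, (‖x‖ ^ 2)⁻¹ = 4 * Real.pi * r := by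
  rw [setIntegral_ball_inv_norm_sq_of_finrank_eq_three volume finrank_euclideanSpace_fin hr,
    measureReal_def, EuclideanSpace.volume_ball_fin_three, ENNReal.toReal_mul,
    ENNReal.toReal_pow, ENNReal.toReal_ofReal zero_le_one,
    ENNReal.toReal_ofReal (by positivity)]
  ring

def outerCLM : E3 →L[ℝ] E3 →L[ℝ] Mat3 :=
  ((vecMulVecBilin ℝ ℝ).compl₁₂ (WithLp.linearEquiv 2 ℝ (Fin 3 → ℝ)).toLinearMap
    (WithLp.linearEquiv 2 ℝ (Fin 3 → ℝ)).toLinearMap).toContinuousBilinearMap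

theorem outerCLM_apply (x y : E3) (i j : Fin 3) : outerCLM x y i j = x i * y j := rfl

theorem outer_inv_norm_smul (x : E3) : outer (‖x‖⁻¹ • x) = (‖x‖ ^ 2)⁻¹ • outerCLM x x := by
  ext i j
  simp only [outer, outerCLM_apply, Matrix.smul_apply, Pi.smul_apply, smul_eq_mul]
  ring

def hedgehog (s : ℝ) (x : E3) : Mat3 := s • ((‖x‖ ^ 2)⁻¹ • outerCLM x x - (1 / 3 : ℝ) • 1)

def hedgehogDeriv (s : ℝ) (x v : E3) : Mat3 :=
  s • ((‖x‖ ^ 2)⁻¹ • (outerCLM x v + outerCLM v x) - (2 * ⟪x, v⟫ / (‖x‖ ^ 2) ^ 2) • outerCLM x x)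

theorem eventuallyEq_hedgehog {s : ℝ} {Φ : E3 → Mat3}
    (hΦ : ∀ x : E3, x ≠ 0 → Φ x = s • (outer (‖x‖⁻¹ • x) - (1 / 3 : ℝ) • (1 : Mat3)))
    {x : E3} (hx : x ≠ 0) : Φ =ᶠ[𝓝 x] hedgehog s := by
  filter_upwards [isOpen_ne.mem_nhds hx] with y hy
  rw [hΦ y hy, hedgehog, outer_inv_norm_smul]

theorem hasFDerivAt_hedgehog (s : ℝ) {x : E3} (hx : x ≠ 0) :
    ∃ D : E3 →L[ℝ] Mat3, HasFDerivAt (hedgehog s) D x ∧ ∀ v, D v = hedgehogDeriv s x v := by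
  have hinv := (hasFDerivAt_inv (by positivity : ‖x‖ ^ 2 ≠ 0)).comp x (hasFDerivAt_id x).norm_sq
  have hout := outerCLM.hasFDerivAt_of_bilinear (hasFDerivAt_id x) (hasFDerivAt_id x)
  refine ⟨_, ((hinv.smul hout).sub_const _).const_smul s, fun v => ?_⟩
  change s • ((‖x‖ ^ 2)⁻¹ • (outerCLM x v + outerCLM v x)
    + ((2 • ⟪x, v⟫) • -((‖x‖ ^ 2) ^ 2)⁻¹) • outerCLM x x) = _
  rw [hedgehogDeriv, ← sub_eq_zero]
  module

theorem sum_frobSq_hedgehogDeriv (s : ℝ) {x : E3} (hx : x ≠ 0) :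
    ∑ α, frobSq (hedgehogDeriv s x (EuclideanSpace.single α 1)) = 4 * s ^ 2 / ‖x‖ ^ 2 := by
  have hnorm : ‖x‖ ^ 2 = x 0 ^ 2 + x 1 ^ 2 + x 2 ^ 2 := by
    simp [EuclideanSpace.norm_sq_eq, Fin.sum_univ_three]
  have hsq : x 0 ^ 2 + x 1 ^ 2 + x 2 ^ 2 ≠ 0 := hnorm ▸ by positivity
  simp only [frobSq, hedgehogDeriv, hnorm]
  simp [outerCLM_apply, Fin.sum_univ_three, EuclideanSpace.inner_single_right]
  field_simp
  ring

theorem stmt7_general (s : ℝ) (Φ : E3 → Mat3)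
    (hΦ : ∀ x : E3, x ≠ 0 → Φ x = s • (outer (‖x‖⁻¹ • x) - (1 / 3 : ℝ) • (1 : Mat3))) :
    (∀ x : E3, x ≠ 0 → DifferentiableAt ℝ Φ x ∧ gradSq Φ x = 4 * s ^ 2 / ‖x‖ ^ 2) ∧
    (∀ r : ℝ, 0 < r →
      ∫ x in Metric.ball (0 : E3) r, gradSq Φ x / 2 = 8 * Real.pi * s ^ 2 * r) := by
  have hgrad : ∀ x : E3, x ≠ 0 →
      DifferentiableAt ℝ Φ x ∧ gradSq Φ x = 4 * s ^ 2 / ‖x‖ ^ 2 := by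
    intro x hx
    obtain ⟨D, hD, hDv⟩ := hasFDerivAt_hedgehog s hx
    have hΦD : HasFDerivAt Φ D x := hD.congr_of_eventuallyEq (eventuallyEq_hedgehog hΦ hx)
    refine ⟨hΦD.differentiableAt, ?_⟩
    simp only [gradSq, pd, hΦD.fderiv, hDv]
    exact sum_frobSq_hedgehogDeriv s hx
  refine ⟨hgrad, fun r hr => ?_⟩
  have hae : ∀ᵐ x : E3, x ∈ ball 0 r → gradSq Φ x / 2 = 2 * s ^ 2 * (‖x‖ ^ 2)⁻¹ := by
    filter_upwards [compl_mem_ae_iff.mpr (measure_singleton (0 : E3))] with x hx _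
    rw [(hgrad x hx).2]
    ring
  rw [setIntegral_congr_ae measurableSet_ball hae, integral_const_mul,
    EuclideanSpace.setIntegral_ball_inv_norm_sq_fin_three hr.le]
  ring

/-- the hedgehog map `Φ(x) = s₊((x/|x|)⊗(x/|x|) − (1/3)Id)` is differentiable away
from the origin with `|∇Φ(x)|² = 4s₊²/|x|²`, and `∫_{B_r} ½|∇Φ|² dx = 8π s₊² r` for all `r > 0`. -/
theorem stmt7 (s : ℝ) (hs : 0 < s) (Φ : E3 → Mat3)
    (hΦ : ∀ x : E3, x ≠ 0 → Φ x = s • (outer (‖x‖⁻¹ • x) - (1 / 3 : ℝ) • (1 : Mat3))) :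
    (∀ x : E3, x ≠ 0 → DifferentiableAt ℝ Φ x ∧ gradSq Φ x = 4 * s ^ 2 / ‖x‖ ^ 2) ∧
    (∀ r : ℝ, 0 < r →
      ∫ x in Metric.ball (0 : E3) r, gradSq Φ x / 2 = 8 * Real.pi * s ^ 2 * r) :=
  stmt7_general s Φ hΦ

end
end

section
/- Let U ⊂ ℝ³ be open, let n : U → ℝ³ be C¹ with |n(x)| = 1 for all x, and set P(x) = s₊(n(x)⊗n(x) − (1/3)Id). Then for every x ∈ U and every direction v ∈ ℝ³, the matrix A(x) := −(2/s₊²)|∇P(x)|² P(x) + (2/s₊)[Σ_{α=1}^3 (∂_αP(x))² − (1/3)|∇P(x)|² Id] is Frobenius-orthogonal to the directional derivative ∂_vP(x) := Σ_α v_α ∂_αP(x), i.e. tr(A(x)·(∂_vP(x))ᵀ) = 0. -/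
open MeasureTheory Matrix Metric Filter
open scoped RealInnerProductSpace

noncomputable section

attribute [local instance] Matrix.frobeniusNormedAddCommGroup Matrix.frobeniusNormedSpace

/-!
With `m_α = ∂_α n`, differentiating `|n|² = 1` gives `n ⬝ m_α = 0`, and
`∂_α P = s (n ⊗ m_α + m_α ⊗ n)`; likewise `∂_v P = s (n ⊗ w + w ⊗ n)` with `n ⬝ w = 0`.
Since `(n ⊗ m + m ⊗ n)² = |m|² n ⊗ n + m ⊗ m` when `n ⬝ m = 0`, every summand of the matrix `A`
is a combination of `n ⊗ n`, `m_α ⊗ m_α` and `Id`, and the Frobenius pairing of each of these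
with `n ⊗ w + w ⊗ n` carries a factor `n ⬝ w` or `n ⬝ m_α`.
-/

open Topology

namespace Matrix

variable {ι R : Type*} [Fintype ι] [CommRing R]

def symOuter (u w : ι → R) : Matrix ι ι R := vecMulVec u w + vecMulVec w u

omit [Fintype ι] in
theorem transpose_symOuter (u w : ι → R) : (symOuter u w)ᵀ = symOuter u w := by
  simp only [symOuter, transpose_add, transpose_vecMulVec, add_comm]

theorem trace_symOuter (u w : ι → R) : trace (symOuter u w) = 2 * (u ⬝ᵥ w) := by
  rw [symOuter, trace_add, trace_vecMulVec, trace_vecMulVec, dotProduct_comm w u, two_mul]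

theorem trace_vecMulVec_self_mul_symOuter (a u w : ι → R) :
    trace (vecMulVec a a * symOuter u w) = 2 * (a ⬝ᵥ u) * (a ⬝ᵥ w) := by
  simp only [symOuter, Matrix.mul_add, vecMulVec_mul_vecMulVec, trace_add, trace_vecMulVec,
    dotProduct_smul, smul_eq_mul]
  ring

theorem symOuter_mul_self {u m : ι → R} (hu : u ⬝ᵥ u = 1) (hum : u ⬝ᵥ m = 0) :
    symOuter u m * symOuter u m = (m ⬝ᵥ m) • vecMulVec u u + vecMulVec m m := by
  simp only [symOuter, Matrix.mul_add, Matrix.add_mul, vecMulVec_mul_vecMulVec, hu, hum,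
    dotProduct_comm m u, zero_smul, vecMulVec_zero, one_smul, vecMulVec_smul]
  abel

theorem trace_symOuter_mul_self_mul_symOuter {u m w : ι → R} (hu : u ⬝ᵥ u = 1)
    (hum : u ⬝ᵥ m = 0) (huw : u ⬝ᵥ w = 0) :
    trace (symOuter u m * symOuter u m * symOuter u w) = 0 := by
  simp only [symOuter_mul_self hu hum, Matrix.add_mul, Matrix.smul_mul, trace_add, trace_smul,
    trace_vecMulVec_self_mul_symOuter, huw, dotProduct_comm m u, hum, smul_eq_mul]
  ring

end Matrix

theorem outer_eq_vecMulVec (n : Fin 3 → ℝ) : outer n = vecMulVec n n := rfl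

section Calculus

variable {E : Type*} [NormedAddCommGroup E] [NormedSpace ℝ E] {x : E}

theorem inner_fderiv_apply_eq_zero_of_eventually_norm_eq {F : Type*} [NormedAddCommGroup F]
    [InnerProductSpace ℝ F] {f : E → F} {c : ℝ} (hf : DifferentiableAt ℝ f x)
    (hc : ∀ᶠ y in 𝓝 x, ‖f y‖ = c) (h : E) : ⟪f x, fderiv ℝ f x h⟫ = 0 := by
  have hsq : (fun y => ‖f y‖ ^ 2) =ᶠ[𝓝 x] fun _ => c ^ 2 := hc.mono fun y hy => by simp only [hy]
  have hzero := hf.hasFDerivAt.norm_sq.unique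
    ((hasFDerivAt_const (c ^ 2) x).congr_of_eventuallyEq hsq)
  simpa using congrArg (fun L : E →L[ℝ] ℝ => L h) hzero

variable {ι κ : Type*} [Fintype ι] [Fintype κ]

def EuclideanSpace.vecMulVecL :
    EuclideanSpace ℝ ι →L[ℝ] EuclideanSpace ℝ κ →L[ℝ] Matrix ι κ ℝ :=
  ((vecMulVecBilin ℝ ℝ).compl₁₂ (WithLp.linearEquiv 2 ℝ (ι → ℝ)).toLinearMap
    (WithLp.linearEquiv 2 ℝ (κ → ℝ)).toLinearMap).toContinuousBilinearMap

theorem fderiv_smul_vecMulVec_self_sub_apply [DecidableEq ι] {n : E → EuclideanSpace ℝ ι}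
    (hn : DifferentiableAt ℝ n x) (s c : ℝ) (h : E) :
    fderiv ℝ (fun y => s • (vecMulVec (n y) (n y) - c • (1 : Matrix ι ι ℝ))) x h
      = s • symOuter (n x) (fderiv ℝ n x h) := by
  have hV := (EuclideanSpace.vecMulVecL (ι := ι) (κ := ι)).hasFDerivAt_of_bilinear
    hn.hasFDerivAt hn.hasFDerivAt
  exact congrArg (fun L => L h) ((hV.sub_const (c • 1)).const_smul s).fderiv

end Calculus

theorem stmt9_general (s : ℝ) (U : Set E3) (hU : IsOpen U)
    (n : E3 → E3) (hn : ContDiffOn ℝ 1 n U) (hunit : ∀ x ∈ U, ‖n x‖ = 1)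
    (P : E3 → Mat3) (hP : ∀ x, P x = s • (outer (n x) - (1 / 3 : ℝ) • (1 : Mat3))) :
    ∀ x ∈ U, ∀ v : Fin 3 → ℝ,
      (((-(2 / s ^ 2) * gradSq P x) • P x
          + (2 / s) • ((∑ α, pd P α x * pd P α x) - (gradSq P x / 3) • (1 : Mat3)))
        * (∑ α, v α • pd P α x)ᵀ).trace = 0 := by
  intro x hx v
  have hnx : DifferentiableAt ℝ n x :=
    (hn.contDiffAt (hU.mem_nhds hx)).differentiableAt one_ne_zero
  have hunit_x : n x ⬝ᵥ n x = 1 := by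
    have := real_inner_self_eq_norm_sq (n x)
    rwa [hunit x hx, one_pow, EuclideanSpace.inner_eq_star_dotProduct, star_trivial] at this
  have horth : ∀ h, n x ⬝ᵥ fderiv ℝ n x h = 0 := fun h => by
    have := inner_fderiv_apply_eq_zero_of_eventually_norm_eq hnx
      (eventually_of_mem (hU.mem_nhds hx) hunit) h
    rwa [EuclideanSpace.inner_eq_star_dotProduct, star_trivial, dotProduct_comm] at this
  have hDP : ∀ h, fderiv ℝ P x h = s • symOuter (n x) (fderiv ℝ n x h) := by
    obtain rfl : P = fun y => s • (vecMulVec (n y) (n y) - (1 / 3 : ℝ) • (1 : Mat3)) := funext hP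
    exact fderiv_smul_vecMulVec_self_sub_apply hnx s (1 / 3)
  obtain ⟨w, hw⟩ : ∃ w, ∑ α, v α • pd P α x = fderiv ℝ P x w :=
    ⟨∑ α, v α • EuclideanSpace.single α 1, by simp only [pd, map_sum, map_smul]⟩
  rw [hw]
  simp only [pd, hDP, hP x, transpose_smul, transpose_symOuter, Matrix.add_mul, Matrix.sub_mul,
    Matrix.smul_mul, Matrix.mul_smul, Matrix.one_mul, Finset.sum_mul, trace_add, trace_sub,
    trace_smul, trace_sum, trace_symOuter, outer_eq_vecMulVec, trace_vecMulVec_self_mul_symOuter,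
    horth, trace_symOuter_mul_self_mul_symOuter hunit_x (horth _) (horth _)]
  simp only [mul_zero, smul_zero, sub_self, Finset.sum_const_zero, add_zero]

/-- for `P = s₊(n⊗n − (1/3)Id)` with `n : U → S²` of class `C¹`, the matrix
`A = −(2/s₊²)|∇P|²P + (2/s₊)[∑_α(∂_αP)² − (1/3)|∇P|²Id]` is Frobenius-orthogonal to every
directional derivative `∂_vP(x)`. -/
theorem stmt9 (s : ℝ) (hs : 0 < s) (U : Set E3) (hU : IsOpen U)
    (n : E3 → E3) (hn : ContDiffOn ℝ 1 n U) (hunit : ∀ x ∈ U, ‖n x‖ = 1)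
    (P : E3 → Mat3) (hP : ∀ x, P x = s • (outer (n x) - (1 / 3 : ℝ) • (1 : Mat3))) :
    ∀ x ∈ U, ∀ v : Fin 3 → ℝ,
      (((-(2 / s ^ 2) * gradSq P x) • P x
          + (2 / s) • ((∑ α, pd P α x * pd P α x) - (gradSq P x / 3) • (1 : Mat3)))
        * (∑ α, v α • pd P α x)ᵀ).trace = 0 :=
  stmt9_general s U hU n hn hunit P hP

end
end

section
/- Let U ⊂ ℝ³ be open, let n : U → ℝ³ be C¹ with |n(x)| = 1 for all x, and set P(x) = s₊(n(x)⊗n(x) − (1/3)Id). Then at every x ∈ U the matrix Σ_{α=1}^3 (∂_αP(x))² commutes with P(x): P(x)·Σ_α(∂_αP(x))² = Σ_α(∂_αP(x))²·P(x). -/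
open MeasureTheory Matrix Metric Filter
open scoped RealInnerProductSpace

noncomputable section

attribute [local instance] Matrix.frobeniusNormedAddCommGroup Matrix.frobeniusNormedSpace

/- With m = ∂_α n, differentiating |n|² = 1 gives n ⬝ m = 0. Hence ∂_αP = s(n⊗m + m⊗n) and
(∂_αP)² = s²(|n|² m⊗m + |m|² n⊗n); both terms commute with n⊗n, because
(n⊗n)(m⊗m) = (n ⬝ m) n⊗m = 0 = (m⊗m)(n⊗n). So every summand commutes with P. -/

open Topology in
theorem inner_fderiv_eq_zero_of_norm_eventually_const {E F : Type*} [NormedAddCommGroup E]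
    [NormedSpace ℝ E] [NormedAddCommGroup F] [InnerProductSpace ℝ F] {f : E → F} {x : E} {c : ℝ}
    (hf : DifferentiableAt ℝ f x) (hc : ∀ᶠ y in 𝓝 x, ‖f y‖ = c) (v : E) :
    ⟪f x, fderiv ℝ f x v⟫ = 0 := by
  have h0 : HasFDerivAt (‖f ·‖ ^ 2) (0 : E →L[ℝ] ℝ) x :=
    (hasFDerivAt_const (c ^ 2) x).congr_of_eventuallyEq (hc.mono fun y hy => by simp [hy])
  simpa using congrArg (· v) (hf.hasFDerivAt.norm_sq.unique h0)

section VecMulVec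

variable {R ι : Type*} [CommSemiring R] [Fintype ι] {u w : ι → R}

theorem vecMulVec_add_mul_self_of_dotProduct_eq_zero (h : u ⬝ᵥ w = 0) :
    (vecMulVec u w + vecMulVec w u) * (vecMulVec u w + vecMulVec w u) =
      (u ⬝ᵥ u) • vecMulVec w w + (w ⬝ᵥ w) • vecMulVec u u := by
  simp only [add_mul, mul_add, vecMulVec_mul_vecMulVec, h, dotProduct_comm w u, zero_smul,
    vecMulVec_smul, vecMulVec_zero, zero_add, add_zero]

theorem commute_vecMulVec_self_vecMulVec_add_mul_self (h : u ⬝ᵥ w = 0) :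
    Commute (vecMulVec u u)
      ((vecMulVec u w + vecMulVec w u) * (vecMulVec u w + vecMulVec w u)) := by
  have huw : vecMulVec u u * vecMulVec w w = 0 := by
    simp [vecMulVec_mul_vecMulVec, h]
  have hwu : vecMulVec w w * vecMulVec u u = 0 := by
    simp [vecMulVec_mul_vecMulVec, dotProduct_comm w u, h]
  rw [vecMulVec_add_mul_self_of_dotProduct_eq_zero h]
  exact ((show Commute _ _ from huw.trans hwu.symm).smul_right _).add_right
    ((Commute.refl _).smul_right _)

end VecMulVec

def vecMulVecCLM (ι : Type*) [Fintype ι] :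
    EuclideanSpace ℝ ι →L[ℝ] EuclideanSpace ℝ ι →L[ℝ] Matrix ι ι ℝ :=
  ((vecMulVecBilin ℝ ℝ).compl₁₂ (WithLp.linearEquiv 2 ℝ (ι → ℝ)).toLinearMap
    (WithLp.linearEquiv 2 ℝ (ι → ℝ)).toLinearMap).toContinuousBilinearMap

theorem hasFDerivAt_vecMulVec_self {E ι : Type*} [NormedAddCommGroup E] [NormedSpace ℝ E]
    [Fintype ι] {f : E → EuclideanSpace ℝ ι} {f' : E →L[ℝ] EuclideanSpace ℝ ι} {x : E}
    (hf : HasFDerivAt f f' x) :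
    HasFDerivAt (fun y => vecMulVec (f y) (f y))
      ((vecMulVecCLM ι).precompR E (f x) f' + (vecMulVecCLM ι).precompL E f' (f x)) x :=
  (vecMulVecCLM ι).hasFDerivAt_of_bilinear hf hf

theorem stmt10_general (s : ℝ) (U : Set E3) (hU : IsOpen U)
    (n : E3 → E3) (hn : ContDiffOn ℝ 1 n U) (hunit : ∀ x ∈ U, ‖n x‖ = 1)
    (P : E3 → Mat3) (hP : ∀ x, P x = s • (outer (n x) - (1 / 3 : ℝ) • (1 : Mat3))) :
    ∀ x ∈ U, P x * (∑ α, pd P α x * pd P α x) = (∑ α, pd P α x * pd P α x) * P x := by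
  intro x hx
  set m : Fin 3 → E3 := fun α => fderiv ℝ n x (EuclideanSpace.single α 1)
  have hnx : DifferentiableAt ℝ n x :=
    (hn.differentiableOn one_ne_zero x hx).differentiableAt (hU.mem_nhds hx)
  have horth (α : Fin 3) : n x ⬝ᵥ m α = 0 := by
    simpa [EuclideanSpace.inner_eq_star_dotProduct, dotProduct_comm] using
      inner_fderiv_eq_zero_of_norm_eventually_const hnx
        (Filter.eventually_of_mem (hU.mem_nhds hx) hunit) (EuclideanSpace.single α 1)
  have hPx : HasFDerivAt P (s • ((vecMulVecCLM _).precompR E3 (n x) (fderiv ℝ n x) +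
      (vecMulVecCLM _).precompL E3 (fderiv ℝ n x) (n x))) x := by
    rw [funext hP]
    exact ((hasFDerivAt_vecMulVec_self hnx.hasFDerivAt).sub_const _).fun_const_smul s
  have hpd (α : Fin 3) : pd P α x = s • (vecMulVec (n x) (m α) + vecMulVec (m α) (n x)) :=
    congrArg (· (EuclideanSpace.single α 1)) hPx.fderiv
  refine (Commute.sum_right _ _ _ fun α _ => ?_).eq
  rw [hP, hpd, smul_mul_smul_comm]
  exact (((commute_vecMulVec_self_vecMulVec_add_mul_self (horth α)).sub_left
    ((Commute.one_left _).smul_left _)).smul_left s).smul_right _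

/-- for `P = s₊(n⊗n − (1/3)Id)` with `n : U → S²` of class `C¹`, the matrix
`∑_α (∂_αP(x))²` commutes with `P(x)` at every `x ∈ U`. -/
theorem stmt10 (s : ℝ) (hs : 0 < s) (U : Set E3) (hU : IsOpen U)
    (n : E3 → E3) (hn : ContDiffOn ℝ 1 n U) (hunit : ∀ x ∈ U, ‖n x‖ = 1)
    (P : E3 → Mat3) (hP : ∀ x, P x = s • (outer (n x) - (1 / 3 : ℝ) • (1 : Mat3))) :
    ∀ x ∈ U, P x * (∑ α, pd P α x * pd P α x) = (∑ α, pd P α x * pd P α x) * P x :=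
  stmt10_general s U hU n hn hunit P hP

end
end

section
/- Let U ⊂ ℝ³∖{0} be open and let P : U → ℝ^m be C². Define Φ : U → ℝ³ by Φ_α(x) = ⟨∂_αP(x), (∂P/∂r)(x)⟩ − ½|∇P(x)|² x_α/|x|, where ⟨·,·⟩ is the Euclidean inner product on ℝ^m. Then Φ is C¹ on U and at every x ∈ U one has the pointwise identity Σ_{α=1}^3 ∂_αΦ_α(x) = ⟨ΔP(x), (∂P/∂r)(x)⟩ − (1/|x|)|(∂P/∂r)(x)|², where Δ acts componentwise; equivalently ⟨ΔP, ∂P/∂r⟩ = (1/|x|)|∂P/∂r|² + div Φ. -/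
/-!
Write `S(x) = DP(x) x = ∑ β, x_β ∂_βP(x)`, so that `∂P/∂r = S/|x|` and
`∂_α S = ∂_αP + D²P(x)(x, e_α)`. In `div Φ`, the term `∑ α, ⟨∂_αP, D²P(x)(x, e_α)⟩/|x|` coming from
`⟨∂_αP, ∂_α(∂P/∂r)⟩` cancels against `½ (x/|x|)·∇|∇P|²` by the symmetry of `D²P`, and the term
`|∇P|²/|x|` cancels against `½|∇P|² div(x/|x|)`; this is where the dimension enters, since
`div(x/|x|) = (n - 1)/|x|` in `ℝⁿ`. What is left is `⟨ΔP, S⟩/|x| - ∑ α, x_α⟨∂_αP, S⟩/|x|³`,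
and `∑ α, x_α ∂_αP = S`.
-/

open MeasureTheory Matrix Metric Filter
open scoped RealInnerProductSpace

noncomputable section

attribute [local instance] Matrix.frobeniusNormedAddCommGroup Matrix.frobeniusNormedSpace

/-- Partial derivative `∂_α P(x)` of a map with values in `ℝ^m`. -/
def pdF {m : ℕ} (P : E3 → EuclideanSpace ℝ (Fin m)) (α : Fin 3) (x : E3) :
    EuclideanSpace ℝ (Fin m) := fderiv ℝ P x (EuclideanSpace.single α 1)

/-- `|∇P(x)|²` for a map with values in `ℝ^m`. -/
def gradSqF {m : ℕ} (P : E3 → EuclideanSpace ℝ (Fin m)) (x : E3) : ℝ :=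
  ∑ α, ‖pdF P α x‖ ^ 2

/-- Radial derivative `(∂P/∂r)(x)` for a map with values in `ℝ^m`. -/
def radDF {m : ℕ} (P : E3 → EuclideanSpace ℝ (Fin m)) (x : E3) :
    EuclideanSpace ℝ (Fin m) := ‖x‖⁻¹ • ∑ α, (x α) • pdF P α x

/-- Componentwise Laplacian for a map with values in `ℝ^m`. -/
def lapF {m : ℕ} (P : E3 → EuclideanSpace ℝ (Fin m)) (x : E3) :
    EuclideanSpace ℝ (Fin m) :=
  ∑ α, fderiv ℝ (fun y => pdF P α y) x (EuclideanSpace.single α 1)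

theorem hasFDerivAt_inv_norm {E : Type*} [NormedAddCommGroup E] [InnerProductSpace ℝ E] {x : E}
    (hx : x ≠ 0) :
    HasFDerivAt (fun y : E => ‖y‖⁻¹) (-(‖x‖ ^ 3)⁻¹ • innerSL ℝ x) x := by
  have hnorm := (hasStrictFDerivAt_norm_sq x).hasFDerivAt.sqrt (by positivity : ‖x‖ ^ 2 ≠ 0)
  have h := (hasDerivAt_inv (by positivity : √(‖x‖ ^ 2) ≠ 0)).comp_hasFDerivAt x hnorm
  simp only [Function.comp_def, Real.sqrt_sq (norm_nonneg _)] at h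
  refine h.congr_fderiv ?_
  ext v
  simp only [_root_.smul_apply, innerSL_apply_apply, smul_eq_mul, nsmul_eq_mul]
  field_simp
  ring

theorem sum_smul_apply_single {n : ℕ} {F : Type*} [NormedAddCommGroup F] [NormedSpace ℝ F]
    (L : EuclideanSpace ℝ (Fin n) →L[ℝ] F) (x : EuclideanSpace ℝ (Fin n)) :
    ∑ i, x i • L (EuclideanSpace.single i 1) = L x := by
  conv_rhs => rw [← (EuclideanSpace.basisFun (Fin n) ℝ).sum_repr x]
  simp [map_sum, map_smul]

theorem hasFDerivAt_coord_div_norm {n : ℕ} {x : EuclideanSpace ℝ (Fin n)} (hx : x ≠ 0)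
    (α : Fin n) :
    HasFDerivAt (fun y : EuclideanSpace ℝ (Fin n) => y α / ‖y‖)
      (‖x‖⁻¹ • EuclideanSpace.proj α - (x α / ‖x‖ ^ 3) • innerSL ℝ x) x := by
  have h := (EuclideanSpace.proj α : EuclideanSpace ℝ (Fin n) →L[ℝ] ℝ).hasFDerivAt.mul
    (hasFDerivAt_inv_norm hx)
  simp only [div_eq_mul_inv]
  refine h.congr_fderiv ?_
  ext v
  simp only [PiLp.proj_apply, _root_.add_apply, _root_.sub_apply,
    _root_.smul_apply, coe_innerSL_apply, smul_eq_mul]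
  ring

theorem sum_fderiv_coord_div_norm {n : ℕ} {x : EuclideanSpace ℝ (Fin n)} (hx : x ≠ 0) :
    ∑ α, fderiv ℝ (fun y : EuclideanSpace ℝ (Fin n) => y α / ‖y‖) x
      (EuclideanSpace.single α 1) = (n - 1) / ‖x‖ := by
  have hx' : ‖x‖ ≠ 0 := norm_ne_zero_iff.2 hx
  have hterm : ∀ α, fderiv ℝ (fun y : EuclideanSpace ℝ (Fin n) => y α / ‖y‖) x
      (EuclideanSpace.single α 1) = ‖x‖⁻¹ - x α ^ 2 / ‖x‖ ^ 3 := fun α => by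
    rw [(hasFDerivAt_coord_div_norm hx α).fderiv]
    simp only [_root_.sub_apply, _root_.smul_apply, PiLp.proj_apply, PiLp.single_eq_same,
      smul_eq_mul, coe_innerSL_apply, EuclideanSpace.inner_single_right, Real.ringHom_apply]
    ring
  simp only [hterm, Finset.sum_sub_distrib, ← Finset.sum_div, ← EuclideanSpace.real_norm_sq_eq,
    Finset.sum_const, Finset.card_univ, Fintype.card_fin, nsmul_eq_mul]
  field_simp

theorem contDiffOn_coord_div_norm {n : ℕ} {U : Set (EuclideanSpace ℝ (Fin n))}
    (hU0 : (0 : EuclideanSpace ℝ (Fin n)) ∉ U) (α : Fin n) :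
    ContDiffOn ℝ 1 (fun y : EuclideanSpace ℝ (Fin n) => y α / ‖y‖) U :=
  (EuclideanSpace.proj α : EuclideanSpace ℝ (Fin n) →L[ℝ] ℝ).contDiff.contDiffOn.div
    (contDiffOn_id.norm ℝ fun _ hy h => hU0 (h ▸ hy))
    fun _ hy => norm_ne_zero_iff.2 fun h => hU0 (h ▸ hy)

theorem radDF_eq {m : ℕ} (P : E3 → EuclideanSpace ℝ (Fin m)) (x : E3) :
    radDF P x = ‖x‖⁻¹ • fderiv ℝ P x x := by
  rw [radDF, ← sum_smul_apply_single]
  rfl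

section

variable {m : ℕ} {P : E3 → EuclideanSpace ℝ (Fin m)} {x : E3}

theorem hasFDerivAt_pdF (hP : ContDiffAt ℝ 2 P x) (β : Fin 3) :
    HasFDerivAt (pdF P β) ((fderiv ℝ (fderiv ℝ P) x).flip (EuclideanSpace.single β 1)) x := by
  have h := ((hP.fderiv_right (m := 1) le_rfl).differentiableAt one_ne_zero).hasFDerivAt
  exact (h.clm_apply (hasFDerivAt_const (EuclideanSpace.single β 1) x)).congr_fderiv (by simp)

theorem hasFDerivAt_fderiv_apply_self (hP : ContDiffAt ℝ 2 P x) :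
    HasFDerivAt (fun y => fderiv ℝ P y y) ((fderiv ℝ (fderiv ℝ P) x).flip x + fderiv ℝ P x) x := by
  have h := ((hP.fderiv_right (m := 1) le_rfl).differentiableAt one_ne_zero).hasFDerivAt
  simpa [add_comm] using h.clm_apply (hasFDerivAt_id x)

theorem hasFDerivAt_radDF (hP : ContDiffAt ℝ 2 P x) (hx : x ≠ 0) :
    HasFDerivAt (radDF P) (‖x‖⁻¹ • ((fderiv ℝ (fderiv ℝ P) x).flip x + fderiv ℝ P x)
      + (-(‖x‖ ^ 3)⁻¹ • innerSL ℝ x).smulRight (fderiv ℝ P x x)) x := by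
  rw [show radDF P = fun y => ‖y‖⁻¹ • fderiv ℝ P y y from funext (radDF_eq P)]
  exact (hasFDerivAt_inv_norm hx).smul (hasFDerivAt_fderiv_apply_self hP)

theorem hasFDerivAt_gradSqF (hP : ContDiffAt ℝ 2 P x) :
    HasFDerivAt (gradSqF P) (∑ β, (2 : ℕ) • (innerSL ℝ (pdF P β x)).comp
      ((fderiv ℝ (fderiv ℝ P) x).flip (EuclideanSpace.single β 1))) x :=
  HasFDerivAt.fun_sum fun β _ => (hasFDerivAt_pdF hP β).norm_sq

theorem lapF_eq (hP : ContDiffAt ℝ 2 P x) :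
    lapF P x = ∑ α, fderiv ℝ (fderiv ℝ P) x (EuclideanSpace.single α 1)
      (EuclideanSpace.single α 1) := by
  simp only [lapF, fun α => (hasFDerivAt_pdF hP α).fderiv, ContinuousLinearMap.flip_apply]

theorem sum_fderiv_inner_pdF_radDF (hP : ContDiffAt ℝ 2 P x) (hx : x ≠ 0) :
    ∑ α, fderiv ℝ (fun y => ⟪pdF P α y, radDF P y⟫) x (EuclideanSpace.single α 1)
      = ⟪lapF P x, radDF P x⟫
        + ‖x‖⁻¹ * (∑ α, ⟪pdF P α x, fderiv ℝ (fderiv ℝ P) x x (EuclideanSpace.single α 1)⟫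
          + gradSqF P x) - ‖x‖⁻¹ * ‖radDF P x‖ ^ 2 := by
  have hsymm : ∀ v w, fderiv ℝ (fderiv ℝ P) x v w = fderiv ℝ (fderiv ℝ P) x w v :=
    hP.isSymmSndFDerivAt (by simp)
  have hterm : ∀ α, fderiv ℝ (fun y => ⟪pdF P α y, radDF P y⟫) x (EuclideanSpace.single α 1)
      = ⟪fderiv ℝ (fderiv ℝ P) x (EuclideanSpace.single α 1) (EuclideanSpace.single α 1),
          radDF P x⟫
        + ‖x‖⁻¹ * (⟪pdF P α x, fderiv ℝ (fderiv ℝ P) x x (EuclideanSpace.single α 1)⟫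
          + ‖pdF P α x‖ ^ 2)
        - (‖x‖ ^ 3)⁻¹ * (x α * ⟪pdF P α x, fderiv ℝ P x x⟫) := fun α => by
    rw [((hasFDerivAt_pdF hP α).inner ℝ (hasFDerivAt_radDF hP hx)).fderiv]
    simp only [ContinuousLinearMap.comp_apply, ContinuousLinearMap.prod_apply,
      ContinuousLinearMap.flip_apply, _root_.add_apply, _root_.smul_apply,
      ContinuousLinearMap.smulRight_apply, coe_innerSL_apply, fderivInnerCLM_apply,
      EuclideanSpace.inner_single_right, Real.ringHom_apply, inner_add_right,
      real_inner_smul_right, smul_eq_mul, ← pdF.eq_1, hsymm x, real_inner_self_eq_norm_sq]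
    ring
  have hradial : ∑ α, x α * ⟪pdF P α x, fderiv ℝ P x x⟫ = ‖fderiv ℝ P x x‖ ^ 2 := by
    rw [← real_inner_self_eq_norm_sq]
    nth_rewrite 2 [← sum_smul_apply_single (fderiv ℝ P x) x]
    simp only [sum_inner, real_inner_smul_left, pdF]
  have hx' : ‖x‖ ≠ 0 := norm_ne_zero_iff.2 hx
  simp only [hterm, Finset.sum_sub_distrib, Finset.sum_add_distrib, ← Finset.mul_sum, ← sum_inner,
    ← lapF_eq hP, hradial, gradSqF]
  rw [radDF_eq P x, norm_smul, norm_inv, norm_norm]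
  field_simp

theorem sum_fderiv_gradSqF_mul_coord_div_norm (hP : ContDiffAt ℝ 2 P x) (hx : x ≠ 0) :
    ∑ α, fderiv ℝ (fun y => gradSqF P y / 2 * (y α / ‖y‖)) x (EuclideanSpace.single α 1)
      = ‖x‖⁻¹ * (∑ α, ⟪pdF P α x, fderiv ℝ (fderiv ℝ P) x x (EuclideanSpace.single α 1)⟫
          + gradSqF P x) := by
  have hG := hasFDerivAt_gradSqF hP
  have hterm : ∀ α, fderiv ℝ (fun y => gradSqF P y / 2 * (y α / ‖y‖)) x (EuclideanSpace.single α 1)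
      = gradSqF P x / 2 * fderiv ℝ (fun y : E3 => y α / ‖y‖) x (EuclideanSpace.single α 1)
        + (2 * ‖x‖)⁻¹ * (x α * fderiv ℝ (gradSqF P) x (EuclideanSpace.single α 1)) := fun α => by
    have hG2 : HasFDerivAt (fun y => gradSqF P y / 2) ((2 : ℝ)⁻¹ • fderiv ℝ (gradSqF P) x) x := by
      simpa only [div_eq_inv_mul] using hG.differentiableAt.hasFDerivAt.const_mul (2 : ℝ)⁻¹
    rw [(hG2.fun_mul (hasFDerivAt_coord_div_norm hx α)).fderiv]
    simp only [_root_.add_apply, _root_.smul_apply, smul_eq_mul,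
      (hasFDerivAt_coord_div_norm hx α).fderiv]
    ring
  have hradial : ∑ α, x α * fderiv ℝ (gradSqF P) x (EuclideanSpace.single α 1)
      = 2 * ∑ α, ⟪pdF P α x, fderiv ℝ (fderiv ℝ P) x x (EuclideanSpace.single α 1)⟫ := by
    have h := sum_smul_apply_single (fderiv ℝ (gradSqF P) x) x
    simp only [smul_eq_mul] at h
    rw [h, hG.fderiv]
    simp [Finset.mul_sum]
  simp only [hterm, Finset.sum_add_distrib, ← Finset.mul_sum, sum_fderiv_coord_div_norm hx, hradial]
  have hx' : ‖x‖ ≠ 0 := norm_ne_zero_iff.2 hx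
  field_simp
  ring

end

section

variable {m : ℕ} {P : E3 → EuclideanSpace ℝ (Fin m)} {U : Set E3}

theorem contDiffOn_pdF (hU : IsOpen U) (hP : ContDiffOn ℝ 2 P U) (β : Fin 3) :
    ContDiffOn ℝ 1 (pdF P β) U :=
  (hP.fderiv_of_isOpen hU le_rfl).clm_apply contDiffOn_const

theorem contDiffOn_radDF (hU : IsOpen U) (hU0 : (0 : E3) ∉ U) (hP : ContDiffOn ℝ 2 P U) :
    ContDiffOn ℝ 1 (radDF P) U := by
  rw [show radDF P = fun y => ‖y‖⁻¹ • fderiv ℝ P y y from funext (radDF_eq P)]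
  exact (contDiffOn_id.norm ℝ fun _ hy h => hU0 (h ▸ hy)).inv
    (fun _ hy => norm_ne_zero_iff.2 fun h => hU0 (h ▸ hy)) |>.smul
    ((hP.fderiv_of_isOpen hU le_rfl).clm_apply contDiffOn_id)

theorem contDiffOn_gradSqF (hU : IsOpen U) (hP : ContDiffOn ℝ 2 P U) :
    ContDiffOn ℝ 1 (gradSqF P) U :=
  ContDiffOn.sum fun β _ => (contDiffOn_pdF hU hP β).norm_sq ℝ

end

/-- for a `C²` map `P : U → ℝ^m` with `U ⊆ ℝ³∖{0}` open, the vector field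
`Φ_α = ⟨∂_αP, ∂P/∂r⟩ − ½|∇P|²x_α/|x|` is `C¹` on `U` and satisfies
`div Φ = ⟨ΔP, ∂P/∂r⟩ − (1/|x|)|∂P/∂r|²` pointwise on `U`. -/
theorem stmt11 (m : ℕ) (U : Set E3) (hU : IsOpen U) (hU0 : (0 : E3) ∉ U)
    (P : E3 → EuclideanSpace ℝ (Fin m)) (hP : ContDiffOn ℝ 2 P U)
    (Φ : E3 → Fin 3 → ℝ)
    (hΦ : ∀ x : E3, ∀ α : Fin 3,
      Φ x α = ⟪pdF P α x, radDF P x⟫ - gradSqF P x / 2 * (x α / ‖x‖)) :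
    (∀ α : Fin 3, ContDiffOn ℝ 1 (fun x => Φ x α) U) ∧
    ∀ x ∈ U,
      ∑ α, fderiv ℝ (fun y => Φ y α) x (EuclideanSpace.single α 1)
        = ⟪lapF P x, radDF P x⟫ - ‖x‖⁻¹ * ‖radDF P x‖ ^ 2 := by
  have hΦ' : ∀ α, (fun y => Φ y α)
      = fun y => ⟪pdF P α y, radDF P y⟫ - gradSqF P y / 2 * (y α / ‖y‖) :=
    fun α => funext fun y => hΦ y α
  have hA : ∀ α, ContDiffOn ℝ 1 (fun y => ⟪pdF P α y, radDF P y⟫) U := fun α =>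
    (contDiffOn_pdF hU hP α).inner ℝ (contDiffOn_radDF hU hU0 hP)
  have hB : ∀ α, ContDiffOn ℝ 1 (fun y => gradSqF P y / 2 * (y α / ‖y‖)) U := fun α =>
    ((contDiffOn_gradSqF hU hP).div_const 2).mul (contDiffOn_coord_div_norm hU0 α)
  refine ⟨fun α => hΦ' α ▸ (hA α).sub (hB α), fun x hx => ?_⟩
  have hPx : ContDiffAt ℝ 2 P x := hP.contDiffAt (hU.mem_nhds hx)
  have hx0 : x ≠ 0 := ne_of_mem_of_not_mem hx hU0
  have hdiff : ∀ f : E3 → ℝ, ContDiffOn ℝ 1 f U → DifferentiableAt ℝ f x := fun f hf =>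
    (hf.contDiffAt (hU.mem_nhds hx)).differentiableAt one_ne_zero
  simp only [hΦ', fderiv_fun_sub (hdiff _ (hA _)) (hdiff _ (hB _)), _root_.sub_apply,
    Finset.sum_sub_distrib, sum_fderiv_inner_pdF_radDF hPx hx0,
    sum_fderiv_gradSqF_mul_coord_div_norm hPx hx0]
  ring

end
end
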